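/- Cut rewrite for zero-sum dGL winning regions: For every hybrid game α and all sets of states X, Y ⊆ S, if both Angel can win α for X and Demon can win α for Y against adversarial opponents, then the coalition can win the systematized game for the conjoined goal: ς_α(X) ∩ δ_α(Y) ⊆ ς_{α^{-d}}(X ∩ Y), where all regions are the one-argument zero-sum dGL winning regions. -/
import Mathlib


open Set

/-- Hybrid games over a variable set `V`. Terms/ODE right-hand sides are
interpreted as functions from states `V → ℝ` to `ℝ`; tests and evolution
domain constraints are sets of states. -/
inductive Game (V : Type*) where
  | assign (x : V) (e : (V → ℝ) → ℝ)
  | ode (x : V) (f : (V → ℝ) → ℝ) (Q : Set (V → ℝ))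
  | test (Q : Set (V → ℝ))
  | choice (a b : Game V)
  | seq (a b : Game V)
  | dual (a : Game V)
  | star (a : Game V)

variable {V : Type*} [DecidableEq V]

/-- `φ : ℝ → (V → ℝ)` (restricted to `[0,r]`) is a solution of `x' = f(x) & Q`
of duration `r ≥ 0`: `t ↦ φ t x` is differentiable with derivative `f (φ s)`
at each `s ∈ [0,r]`, `φ s ∈ Q` on `[0,r]`, and all other variables stay
constant along `φ`. -/
def IsSolution (x : V) (f : (V → ℝ) → ℝ) (Q : Set (V → ℝ)) (r : ℝ)
    (φ : ℝ → (V → ℝ)) : Prop :=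
  0 ≤ r ∧
  (∀ s ∈ Set.Icc 0 r, HasDerivAt (fun t => φ t x) (f (φ s)) s) ∧
  (∀ s ∈ Set.Icc 0 r, φ s ∈ Q) ∧
  (∀ s ∈ Set.Icc 0 r, ∀ y, y ≠ x → φ s y = φ 0 y)

mutual
/-- Angel's semi-competitive winning region ς_α(X,Y). -/
def angel : Game V → Set (V → ℝ) → Set (V → ℝ) → Set (V → ℝ)
  | .assign x e, X, _ => {ω | Function.update ω x (e ω) ∈ X}
  | .ode x f Q, X, _ =>
      {ω | ∃ r φ, IsSolution x f Q r φ ∧ φ 0 = ω ∧ φ r ∈ X}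
  | .test Q, X, _ => Q ∩ X
  | .choice a b, X, Y => angel a X Y ∪ angel b X Y
  | .seq a b, X, Y => angel a (angel b X Y) (demon b X Y)
  | .dual a, X, Y => demon a Y X
  | .star a, X, Y =>
      ⋂₀ {Z | X ∪ angel a Z Zᶜ ⊆ Z} ∪
      ⋂₀ {Z | (X ∩ Y) ∪ (angel a Z Z ∩ demon a Z Z) ⊆ Z}

/-- Demon's semi-competitive winning region δ_α(X,Y). -/
def demon : Game V → Set (V → ℝ) → Set (V → ℝ) → Set (V → ℝ)
  | .assign x e, _, Y => {ω | Function.update ω x (e ω) ∈ Y}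
  | .ode x f Q, X, Y =>
      {ω | ∀ r φ, IsSolution x f Q r φ → φ 0 = ω → ∀ s ∈ Set.Icc 0 r, φ s ∈ Y} ∪
      {ω | ∃ r φ, IsSolution x f Q r φ ∧ φ 0 = ω ∧ ∃ s ∈ Set.Icc 0 r, φ s ∈ X ∩ Y}
  | .test Q, _, Y => Qᶜ ∪ Y
  | .choice a b, X, Y =>
      (demon a X Y ∩ demon b X Y) ∪ (demon a X Y ∩ angel a X Y) ∪
      (demon b X Y ∩ angel b X Y)
  | .seq a b, X, Y => demon a (angel b X Y) (demon b X Y)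
  | .dual a, X, Y => angel a Y X
  | .star a, X, Y =>
      ⋃₀ {Z | Z ⊆ Y ∩ demon a Zᶜ Z} ∪
      ⋂₀ {Z | (X ∩ Y) ∪ (angel a Z Z ∩ demon a Z Z) ⊆ Z}
end

/-- Angel's one-argument zero-sum dGL winning region ς_α(X). -/
def dglAngel : Game V → Set (V → ℝ) → Set (V → ℝ)
  | .assign x e, X => {ω | Function.update ω x (e ω) ∈ X}
  | .ode x f Q, X => {ω | ∃ r φ, IsSolution x f Q r φ ∧ φ 0 = ω ∧ φ r ∈ X}
  | .test Q, X => Q ∩ X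
  | .choice a b, X => dglAngel a X ∪ dglAngel b X
  | .seq a b, X => dglAngel a (dglAngel b X)
  | .dual a, X => (dglAngel a Xᶜ)ᶜ
  | .star a, X => ⋂₀ {Z | X ∪ dglAngel a Z ⊆ Z}

/-- Demon's one-argument zero-sum dGL winning region δ_α(X) = (ς_α(Xᶜ))ᶜ. -/
def dglDemon (g : Game V) (X : Set (V → ℝ)) : Set (V → ℝ) :=
  (dglAngel g Xᶜ)ᶜ

/-- Systematization α^{-d}: removes all dual operators. -/
def Game.sys : Game V → Game V
  | .assign x e => .assign x e
  | .ode x f Q => .ode x f Q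
  | .test Q => .test Q
  | .choice a b => .choice a.sys b.sys
  | .seq a b => .seq a.sys b.sys
  | .dual a => a.sys
  | .star a => .star a.sys

theorem dglAngel_mono (a : Game V) : ∀ ⦃X X' : Set (V → ℝ)⦄, X ⊆ X' →
    dglAngel a X ⊆ dglAngel a X' := by
  induction a with
  | assign x e =>
      intro X X' h ω hω; exact h hω
  | ode x f Q =>
      rintro X X' h ω ⟨r, φ, hs, h0, hr⟩; exact ⟨r, φ, hs, h0, h hr⟩
  | test Q =>
      intro X X' h; exact inter_subset_inter_right _ h
  | choice a b iha ihb =>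
      intro X X' h; exact union_subset_union (iha h) (ihb h)
  | seq a b iha ihb =>
      intro X X' h; exact iha (ihb h)
  | dual a iha =>
      intro X X' h
      exact compl_subset_compl.2 (iha (compl_subset_compl.2 h))
  | star a iha =>
      intro X X' h
      apply sInter_subset_sInter
      intro Z hZ
      exact (union_subset_union_left _ h).trans hZ

/-- Cut rewrite for zero-sum dGL winning regions:
`ς_α(X) ∩ δ_α(Y) ⊆ ς_{α^{-d}}(X ∩ Y)`. -/
theorem dgl_cut_rewrite (α : Game V) (X Y : Set (V → ℝ)) :
    dglAngel α X ∩ dglDemon α Y ⊆ dglAngel α.sys (X ∩ Y) := by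
  induction α generalizing X Y with
  | assign x e =>
      rintro ω ⟨hX, hY⟩
      simp only [dglDemon, dglAngel, mem_compl_iff, mem_setOf_eq, not_not] at hY
      exact ⟨hX, hY⟩
  | ode x f Q =>
      rintro ω ⟨⟨r, φ, hs, h0, hr⟩, hY⟩
      simp only [dglDemon, dglAngel, mem_compl_iff, mem_setOf_eq] at hY
      refine ⟨r, φ, hs, h0, hr, ?_⟩
      by_contra h
      exact hY ⟨r, φ, hs, h0, h⟩
  | test Q =>
      rintro ω ⟨⟨hQ, hX⟩, hY⟩
      simp only [dglDemon, dglAngel, mem_compl_iff, mem_inter_iff, not_and,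
        not_not] at hY
      exact ⟨hQ, hX, hY hQ⟩
  | choice a b iha ihb =>
      rintro ω ⟨hX, hY⟩
      simp only [dglDemon, dglAngel, compl_union, mem_inter_iff,
        mem_compl_iff] at hY
      rcases hX with hX | hX
      · exact Or.inl (iha _ _ ⟨hX, hY.1⟩)
      · exact Or.inr (ihb _ _ ⟨hX, hY.2⟩)
  | seq a b iha ihb =>
      rintro ω ⟨hX, hY⟩
      have hY' : ω ∈ dglDemon a (dglDemon b Y) := by
        simpa only [dglDemon, dglAngel, compl_compl] using hY
      exact dglAngel_mono a.sys (ihb X Y) (iha _ _ ⟨hX, hY'⟩)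
  | dual a iha =>
      rintro ω ⟨hX, hY⟩
      have hY' : ω ∈ dglAngel a Y := by
        simpa only [dglDemon, dglAngel, compl_compl] using hY
      have hX' : ω ∈ dglDemon a X := hX
      have := iha Y X ⟨hY', hX'⟩
      rw [inter_comm Y X] at this
      exact this
  | star a iha =>
      rintro ω ⟨hA, hD⟩
      set L : Set (V → ℝ) := ⋂₀ {Z | Yᶜ ∪ dglAngel a Z ⊆ Z} with hLdef
      have hLfix : Yᶜ ∪ dglAngel a L ⊆ L := by
        intro z hz
        rw [mem_sInter]
        intro Z hZ
        rcases hz with hz | hz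
        · exact hZ (Or.inl hz)
        · exact hZ (Or.inr (dglAngel_mono a (sInter_subset_of_mem hZ) hz))
      have hD' : ω ∉ L := hD
      have hWY : ∀ z, z ∉ L → z ∈ Y := by
        intro z hz
        by_contra h
        exact hz (hLfix (Or.inl h))
      simp only [Game.sys, dglAngel]
      rw [mem_sInter]
      intro M hM
      have hZ0 : X ∪ dglAngel a (L ∪ M) ⊆ L ∪ M := by
        rintro z (hz | hz)
        · by_cases hzL : z ∈ L
          · exact Or.inl hzL
          · exact Or.inr (hM (Or.inl ⟨hz, hWY z hzL⟩))
        · by_cases hzL : z ∈ L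
          · exact Or.inl hzL
          · refine Or.inr ?_
            have hzD : z ∈ dglDemon a Lᶜ := by
              simp only [dglDemon, compl_compl, mem_compl_iff]
              exact fun h => hzL (hLfix (Or.inr h))
            have h1 := iha (L ∪ M) Lᶜ ⟨hz, hzD⟩
            have h2 : (L ∪ M) ∩ Lᶜ ⊆ M := by
              rintro w ⟨(hw | hw), hw'⟩
              · exact absurd hw hw'
              · exact hw
            exact hM (Or.inr (dglAngel_mono a.sys h2 h1))
      have hωLM : ω ∈ L ∪ M := hA (L ∪ M) hZ0
      rcases hωLM with h | h
      · exact absurd h hD'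
      · exact h
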